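/- Let T be a semistandard skew tableau satisfying the lattice property. Divide T by a vertical line into two pieces: T'' consisting of the leftmost ℓ columns and T' the remaining part to the right. Then T' is again a semistandard skew tableau satisfying the lattice property, and γ_{n+ℓ}(T) ≤ γ_n(T') for every positive integer n. -/

import Mathlib

/-- A skew tableau: a skew Young diagram `λ/μ` (rows indexed from `0`, row `i`
occupying the columns `μ i ≤ j < λ i`) together with a positive integer entry in
each box. -/
structure SkewTableau where
  /-- the outer partition -/
  lam : ℕ → ℕ
  /-- the inner partition -/
  mu : ℕ → ℕ
  /-- the entry in row `i`, column `j` -/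
  entry : ℕ → ℕ → ℕ
  lam_antitone : Antitone lam
  mu_antitone : Antitone mu
  mu_le : ∀ i, mu i ≤ lam i
  support_finite : ∃ N, ∀ i, N ≤ i → lam i = 0
  entry_pos : ∀ i j, mu i ≤ j → j < lam i → 0 < entry i j

namespace SkewTableau

/-- `(i,j)` is a box of the skew diagram. -/
def Box (T : SkewTableau) (i j : ℕ) : Prop := T.mu i ≤ j ∧ j < T.lam i

/-- Semistandard: rows weakly increase left-to-right, columns strictly increase
top-to-bottom. -/
def Semistandard (T : SkewTableau) : Prop :=
  (∀ i j j', T.Box i j → T.Box i j' → j ≤ j' → T.entry i j ≤ T.entry i j') ∧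
  (∀ i j, T.Box i j → T.Box (i + 1) j → T.entry i j < T.entry (i + 1) j)

/-- The number of boxes weakly preceding `(i,j)` in the right-to-left, top-to-bottom
reading order (including `(i,j)` itself) whose entry equals `v`. -/
noncomputable def prefixCount (T : SkewTableau) (i j v : ℕ) : ℕ :=
  Set.ncard {q : ℕ × ℕ | T.Box q.1 q.2 ∧ (q.1 < i ∨ (q.1 = i ∧ j ≤ q.2)) ∧
    T.entry q.1 q.2 = v}

/-- The lattice property: in every prefix of the reading word there are at least as
many `v`'s as `(v+1)`'s, for every `v ≥ 1`. -/
def LatticeProperty (T : SkewTableau) : Prop :=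
  ∀ i j v, T.Box i j → T.prefixCount i j (v + 2) ≤ T.prefixCount i j (v + 1)

/-- The number of boxes of `T` carrying the entry `v`. -/
noncomputable def count (T : SkewTableau) (v : ℕ) : ℕ :=
  Set.ncard {q : ℕ × ℕ | T.Box q.1 q.2 ∧ T.entry q.1 q.2 = v}

/-- `γ_n(T)`: the number of parts of the content partition of `T` of size at least
`n`, i.e. the number of values `v ≥ 1` occurring at least `n` times in `T`. -/
noncomputable def gamma (T : SkewTableau) (n : ℕ) : ℕ :=
  Set.ncard {v : ℕ | 1 ≤ v ∧ n ≤ T.count v}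

end SkewTableau

namespace SkewTableau

/-- The part of `T` strictly to the right of its leftmost `ℓ` columns (columns `≥ ℓ`),
with the same entries. -/
def restrictRight (T : SkewTableau) (ℓ : ℕ) : SkewTableau where
  lam := T.lam
  mu := fun i => max (min ℓ (T.lam i)) (T.mu i)
  entry := T.entry
  lam_antitone := T.lam_antitone
  mu_antitone := Antitone.max (Antitone.min antitone_const T.lam_antitone) T.mu_antitone
  mu_le := fun i => max_le (min_le_right _ _) (T.mu_le i)
  support_finite := T.support_finite
  entry_pos := fun i j hj hj' => T.entry_pos i j (le_trans (le_max_right _ _) hj) hj'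

end SkewTableau

open SkewTableau

namespace SkewTableau

@[simp] lemma entry_restrict (T : SkewTableau) (ℓ : ℕ) :
    (T.restrictRight ℓ).entry = T.entry := rfl

lemma box_restrict (T : SkewTableau) {ℓ i j : ℕ} :
    (T.restrictRight ℓ).Box i j ↔ T.Box i j ∧ ℓ ≤ j := by
  show max (min ℓ (T.lam i)) (T.mu i) ≤ j ∧ j < T.lam i ↔ _
  constructor
  · rintro ⟨h1, h2⟩
    have hm : min ℓ (T.lam i) ≤ j := le_trans (le_max_left _ _) h1
    have hmu : T.mu i ≤ j := le_trans (le_max_right _ _) h1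
    refine ⟨⟨hmu, h2⟩, ?_⟩
    rcases le_total ℓ (T.lam i) with h | h
    · rwa [min_eq_left h] at hm
    · rw [min_eq_right h] at hm; omega
  · rintro ⟨⟨h1, h2⟩, h3⟩
    exact ⟨max_le (le_trans (min_le_left _ _) h3) h1, h2⟩

lemma box_finite (T : SkewTableau) : {q : ℕ × ℕ | T.Box q.1 q.2}.Finite := by
  obtain ⟨N, hN⟩ := T.support_finite
  apply Set.Finite.subset ((Set.finite_Iio N).prod (Set.finite_Iio (T.lam 0)))
  rintro ⟨a, c⟩ ⟨h1, h2⟩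
  refine ⟨?_, ?_⟩
  · show a < N
    by_contra h
    push_neg at h
    have h0 := hN a h
    rw [h0] at h2
    omega
  · show c < T.lam 0
    exact lt_of_lt_of_le h2 (T.lam_antitone (Nat.zero_le a))

/-- Entries increase by at least `m` going down `m` rows in a fixed column. -/
lemma col_chain (T : SkewTableau) (hss : T.Semistandard) {d : ℕ} :
    ∀ m r, T.Box r d → T.Box (r + m) d → T.entry r d + m ≤ T.entry (r + m) d := by
  intro m
  induction m with
  | zero => intro r h1 _; simp
  | succ m ih =>
    intro r h1 h2
    have hrw : r + (m + 1) = r + m + 1 := by omega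
    rw [hrw] at h2 ⊢
    have hmid : T.Box (r + m) d :=
      ⟨le_trans (T.mu_antitone (Nat.le_add_right r m)) h1.1,
        lt_of_lt_of_le h2.2 (T.lam_antitone (by omega))⟩
    have hs := hss.2 (r + m) d hmid h2
    have h3 := ih r h1 hmid
    omega

/-- Each value occurs at most once in each column. -/
lemma col_inj (T : SkewTableau) (hss : T.Semistandard) {r r' d : ℕ}
    (h1 : T.Box r d) (h2 : T.Box r' d) (he : T.entry r d = T.entry r' d) : r = r' := by
  rcases lt_trichotomy r r' with h | h | h
  · have := T.col_chain hss (r' - r) r h1 (by rwa [Nat.add_sub_cancel' h.le])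
    rw [Nat.add_sub_cancel' h.le] at this
    omega
  · exact h
  · have := T.col_chain hss (r - r') r' h2 (by rwa [Nat.add_sub_cancel' h.le])
    rw [Nat.add_sub_cancel' h.le] at this
    omega

end SkewTableau

/-- Dividing a semistandard skew tableau `T` with the lattice property by a vertical
line, with `T''` the leftmost `ℓ` columns and `T'` the part on the right: `T'` is
again a semistandard skew tableau with the lattice property, and
`γ_{n+ℓ}(T) ≤ γ_n(T')`. -/
theorem stmt_6 (T : SkewTableau) (hss : T.Semistandard) (hlp : T.LatticeProperty)
    (ℓ n : ℕ) (hn : 0 < n) :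
    (T.restrictRight ℓ).Semistandard ∧ (T.restrictRight ℓ).LatticeProperty ∧
      T.gamma (n + ℓ) ≤ (T.restrictRight ℓ).gamma n := by
  have hfin : ∀ (s : Set (ℕ × ℕ)), (∀ q ∈ s, T.Box q.1 q.2) → s.Finite :=
    fun s h => T.box_finite.subset h
  refine ⟨⟨?_, ?_⟩, ?_, ?_⟩
  · intro i j j' h h' hle
    exact hss.1 i j j' ((T.box_restrict.mp h).1) ((T.box_restrict.mp h').1) hle
  · intro i j h h'
    exact hss.2 i j (T.box_restrict.mp h).1 (T.box_restrict.mp h').1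
  · -- lattice property
    intro i j v hb'
    obtain ⟨hbox, hlj⟩ := T.box_restrict.mp hb'
    have hpc : ∀ w, (T.restrictRight ℓ).prefixCount i j w =
        Set.ncard {q : ℕ × ℕ | (T.Box q.1 q.2 ∧ ℓ ≤ q.2) ∧
          (q.1 < i ∨ (q.1 = i ∧ j ≤ q.2)) ∧ T.entry q.1 q.2 = w} := by
      intro w
      unfold prefixCount
      congr 1
      ext q
      simp only [Set.mem_setOf_eq, SkewTableau.box_restrict, entry_restrict]
    rw [hpc, hpc]
    set R2 := {q : ℕ × ℕ | (T.Box q.1 q.2 ∧ ℓ ≤ q.2) ∧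
      (q.1 < i ∨ (q.1 = i ∧ j ≤ q.2)) ∧ T.entry q.1 q.2 = v + 2} with hR2def
    set R1 := {q : ℕ × ℕ | (T.Box q.1 q.2 ∧ ℓ ≤ q.2) ∧
      (q.1 < i ∨ (q.1 = i ∧ j ≤ q.2)) ∧ T.entry q.1 q.2 = v + 1} with hR1def
    rcases Set.eq_empty_or_nonempty R2 with he | hne
    · rw [he, Set.ncard_empty]; exact Nat.zero_le _
    have hR2fin : R2.Finite := hfin _ (fun q hq => hq.1.1)
    have hR1fin : R1.Finite := hfin _ (fun q hq => hq.1.1)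
    obtain ⟨qm, hqm, hmax'⟩ := Set.Finite.exists_maximalFor Prod.fst R2 hR2fin hne
    have hmax : ∀ q ∈ R2, q.1 ≤ qm.1 := by
      intro q hq
      rcases le_total q.1 qm.1 with h | h
      · exact h
      · exact hmax' hq h
    obtain ⟨⟨hqmb, hqml⟩, hqmpre, hqme⟩ := hqm
    -- A = qm.1 ; b = least column of a `v+2` in row A
    set A := qm.1 with hAdef
    set colSet := {t : ℕ | T.Box A t ∧ T.entry A t = v + 2} with hcolSet
    have hcne : colSet.Nonempty := ⟨qm.2, hqmb, hqme⟩
    set b := sInf colSet with hbdef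
    obtain ⟨hbbox, hbe⟩ : b ∈ colSet := Nat.sInf_mem hcne
    have hAi : A ≤ i := by rcases hqmpre with h | ⟨h, _⟩ <;> omega
    have hlat : Set.ncard {q : ℕ × ℕ | T.Box q.1 q.2 ∧
          (q.1 < A ∨ (q.1 = A ∧ b ≤ q.2)) ∧ T.entry q.1 q.2 = v + 2} ≤
        Set.ncard {q : ℕ × ℕ | T.Box q.1 q.2 ∧
          (q.1 < A ∨ (q.1 = A ∧ b ≤ q.2)) ∧ T.entry q.1 q.2 = v + 1} :=
      hlp A b v hbbox
    set P2 := {q : ℕ × ℕ | T.Box q.1 q.2 ∧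
      (q.1 < A ∨ (q.1 = A ∧ b ≤ q.2)) ∧ T.entry q.1 q.2 = v + 2} with hP2def
    set P1 := {q : ℕ × ℕ | T.Box q.1 q.2 ∧
      (q.1 < A ∨ (q.1 = A ∧ b ≤ q.2)) ∧ T.entry q.1 q.2 = v + 1} with hP1def
    set W := {q : ℕ × ℕ | T.Box q.1 q.2 ∧ q.1 < A ∧ q.2 < ℓ ∧
      T.entry q.1 q.2 = v + 2} with hWdef
    set E := {q : ℕ × ℕ | T.Box q.1 q.2 ∧ q.1 = A ∧ T.entry q.1 q.2 = v + 2 ∧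
      ¬(ℓ ≤ q.2 ∧ (q.1 < i ∨ (q.1 = i ∧ j ≤ q.2)))} with hEdef
    set BAD := {q : ℕ × ℕ | T.Box q.1 q.2 ∧ q.1 < A ∧ q.2 < ℓ ∧
      T.entry q.1 q.2 = v + 1} with hBADdef
    have hWfin : W.Finite := hfin _ (fun q hq => hq.1)
    have hEfin : E.Finite := hfin _ (fun q hq => hq.1)
    have hBADfin : BAD.Finite := hfin _ (fun q hq => hq.1)
    have hP2fin : P2.Finite := hfin _ (fun q hq => hq.1)
    -- Step 1 : R2, W, E are disjoint subsets of P2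
    have hsub1 : R2 ∪ (W ∪ E) ⊆ P2 := by
      rintro q (⟨⟨hb, hlc⟩, hpre, hev⟩ | ⟨hb, haA, hcl, hev⟩ | ⟨hb, haA, hev, hnot⟩)
      · have haA : q.1 ≤ A := hmax q ⟨⟨hb, hlc⟩, hpre, hev⟩
        rcases lt_or_eq_of_le haA with h | h
        · exact ⟨hb, Or.inl h, hev⟩
        · refine ⟨hb, Or.inr ⟨h, Nat.sInf_le ?_⟩, hev⟩
          rw [h] at hb hev
          exact ⟨hb, hev⟩
      · exact ⟨hb, Or.inl haA, hev⟩
      · refine ⟨hb, Or.inr ⟨haA, Nat.sInf_le ?_⟩, hev⟩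
        rw [haA] at hb hev
        exact ⟨hb, hev⟩
    have hd1 : Disjoint R2 (W ∪ E) := by
      rw [Set.disjoint_left]
      rintro q ⟨⟨hb, hlc⟩, hpre, hev⟩ (⟨_, _, hcl, _⟩ | ⟨_, _, _, hnot⟩)
      · omega
      · exact hnot ⟨hlc, hpre⟩
    have hd2 : Disjoint W E := by
      rw [Set.disjoint_left]
      rintro q ⟨_, haA, _, _⟩ ⟨_, haA', _, _⟩
      omega
    have h1 : R2.ncard + W.ncard + E.ncard ≤ P2.ncard := by
      have e1 : (W ∪ E).ncard = W.ncard + E.ncard := Set.ncard_union_eq hd2 hWfin hEfin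
      have e2 : (R2 ∪ (W ∪ E)).ncard = R2.ncard + (W ∪ E).ncard :=
        Set.ncard_union_eq hd1 hR2fin (hWfin.union hEfin)
      have e3 := Set.ncard_le_ncard hsub1 hP2fin
      omega
    -- Step 2 : P1 ⊆ R1 ∪ BAD
    have hsub2 : P1 ⊆ R1 ∪ BAD := by
      intro q hq
      obtain ⟨hb, hpre, hev⟩ := hq
      have haA : q.1 < A := by
        rcases hpre with h | ⟨h, hbc⟩
        · exact h
        · exfalso
          rw [h] at hb hev
          have h2 := hss.1 A b q.2 hbbox hb hbc
          omega
      rcases le_or_gt ℓ q.2 with h | h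
      · exact Or.inl ⟨⟨hb, h⟩, Or.inl (lt_of_lt_of_le haA hAi), hev⟩
      · exact Or.inr ⟨hb, haA, h, hev⟩
    have h3 : P1.ncard ≤ R1.ncard + BAD.ncard :=
      le_trans (Set.ncard_le_ncard hsub2 (hR1fin.union hBADfin)) (Set.ncard_union_le _ _)
    -- Step 3 : BAD injects into E
    have hkey : ∀ q ∈ BAD, q.1 + 1 = A ∧ ((A, q.2) : ℕ × ℕ) ∈ E := by
      intro q hq
      obtain ⟨hb, haA, hcl, hev⟩ := hq
      have hclam : q.2 < T.lam A := by
        have h1 : qm.2 < T.lam A := hqmb.2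
        omega
      have hbAc : T.Box A q.2 :=
        ⟨le_trans (T.mu_antitone haA.le) hb.1, hclam⟩
      have hch := T.col_chain hss (A - q.1) q.1 hb (by rwa [Nat.add_sub_cancel' haA.le])
      rw [Nat.add_sub_cancel' haA.le] at hch
      have hle2 : T.entry A q.2 ≤ T.entry A qm.2 :=
        hss.1 A q.2 qm.2 hbAc hqmb (by omega)
      rw [hqme] at hle2
      rw [hev] at hch
      have hA1 : q.1 + 1 = A := by omega
      have heA : T.entry A q.2 = v + 2 := by omega
      exact ⟨hA1, hbAc, rfl, heA, fun hcon => (by omega : ¬ (ℓ ≤ q.2)) hcon.1⟩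
    have h4 : BAD.ncard ≤ E.ncard := by
      apply Set.ncard_le_ncard_of_injOn (fun q => (A, q.2))
        (fun q hq => (hkey q hq).2) ?_ hEfin
      rintro q hq q' hq' heq
      have h5 := (hkey q hq).1
      have h6 := (hkey q' hq').1
      have h7' : ((A, q.2) : ℕ × ℕ) = (A, q'.2) := heq
      have h7 : q.2 = q'.2 := by
        injection h7' with h7a h7b
      have h8 : q.1 = q'.1 := by omega
      exact Prod.ext h8 h7
    omega
  · -- gamma
    refine Set.ncard_le_ncard ?_ ?_
    · rintro v ⟨hv1, hvc⟩
      refine ⟨hv1, ?_⟩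
      -- count T v ≤ count T' v + ℓ
      have hsplit : {q : ℕ × ℕ | T.Box q.1 q.2 ∧ T.entry q.1 q.2 = v} ⊆
          {q : ℕ × ℕ | (T.restrictRight ℓ).Box q.1 q.2 ∧
            (T.restrictRight ℓ).entry q.1 q.2 = v} ∪
          {q : ℕ × ℕ | T.Box q.1 q.2 ∧ q.2 < ℓ ∧ T.entry q.1 q.2 = v} := by
        rintro q ⟨hb, he⟩
        rcases lt_or_ge q.2 ℓ with h | h
        · exact Or.inr ⟨hb, h, he⟩
        · exact Or.inl ⟨T.box_restrict.mpr ⟨hb, h⟩, he⟩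
      have hufin : ({q : ℕ × ℕ | (T.restrictRight ℓ).Box q.1 q.2 ∧
            (T.restrictRight ℓ).entry q.1 q.2 = v} ∪
          {q : ℕ × ℕ | T.Box q.1 q.2 ∧ q.2 < ℓ ∧ T.entry q.1 q.2 = v}).Finite := by
        apply hfin
        rintro q (hq | hq)
        · exact (T.box_restrict.mp hq.1).1
        · exact hq.1
      have hB : Set.ncard {q : ℕ × ℕ | T.Box q.1 q.2 ∧ q.2 < ℓ ∧
          T.entry q.1 q.2 = v} ≤ ℓ := by
        have hmaps : ∀ q ∈ {q : ℕ × ℕ | T.Box q.1 q.2 ∧ q.2 < ℓ ∧ T.entry q.1 q.2 = v},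
            (fun q : ℕ × ℕ => q.2) q ∈ (↑(Finset.range ℓ) : Set ℕ) := by
          rintro q ⟨_, hc, _⟩
          simpa using hc
        have hinj : Set.InjOn (fun q : ℕ × ℕ => q.2)
            {q : ℕ × ℕ | T.Box q.1 q.2 ∧ q.2 < ℓ ∧ T.entry q.1 q.2 = v} := by
          rintro q ⟨hb, _, he⟩ q' ⟨hb', _, he'⟩ h
          simp only at h
          rw [← h] at hb' he'
          have h1 : q.1 = q'.1 := T.col_inj hss hb hb' (by rw [he, he'])
          exact Prod.ext h1 h
        have h9 := Set.ncard_le_ncard_of_injOn _ hmaps hinj (Finset.range ℓ).finite_toSet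
        rwa [Set.ncard_coe_finset, Finset.card_range] at h9
      have hA : T.count v ≤ (T.restrictRight ℓ).count v +
          Set.ncard {q : ℕ × ℕ | T.Box q.1 q.2 ∧ q.2 < ℓ ∧ T.entry q.1 q.2 = v} :=
        le_trans (Set.ncard_le_ncard hsplit hufin) (Set.ncard_union_le _ _)
      have : T.count v ≤ (T.restrictRight ℓ).count v + ℓ := by omega
      omega
    · -- finiteness of the target set
      apply Set.Finite.subset (T.box_finite.image (fun q => T.entry q.1 q.2))
      rintro v ⟨hv1, hvc⟩
      have hne : {q : ℕ × ℕ | (T.restrictRight ℓ).Box q.1 q.2 ∧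
          (T.restrictRight ℓ).entry q.1 q.2 = v}.Nonempty := by
        apply Set.nonempty_of_ncard_ne_zero
        have hc : n ≤ Set.ncard {q : ℕ × ℕ | (T.restrictRight ℓ).Box q.1 q.2 ∧
            (T.restrictRight ℓ).entry q.1 q.2 = v} := hvc
        omega
      obtain ⟨q, hq1, hq2⟩ := hne
      exact ⟨q, (T.box_restrict.mp hq1).1, hq2⟩
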